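/- For a, b, c > 0, a symmetric traceless real 3×3 matrix Q belongs to 𝒩 (i.e. Q = s₊(n⊗n − (1/3)Id) for some unit vector n ∈ S²) if and only if Q satisfies the matrix equation Q² − (s₊/3)Q − (2s₊²/9)Id = 0. -/
import Mathlib


open MeasureTheory Matrix Metric Filter
open scoped RealInnerProductSpace

noncomputable section

attribute [local instance] Matrix.frobeniusNormedAddCommGroup Matrix.frobeniusNormedSpace

/-- The space of real 3×3 matrices. -/
abbrev Mat3 := Matrix (Fin 3) (Fin 3) ℝ

/-- Euclidean 3-space. -/
abbrev E3 := EuclideanSpace ℝ (Fin 3)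

/-- The constant `s₊ = (b² + √(b⁴ + 24a²c²))/(4c²)`. -/
def sPlus (a b c : ℝ) : ℝ := (b ^ 2 + Real.sqrt (b ^ 4 + 24 * a ^ 2 * c ^ 2)) / (4 * c ^ 2)

/-- The matrix `n ⊗ n`, with entries `nᵢnⱼ`. -/
def outer (n : Fin 3 → ℝ) : Mat3 := fun i j => n i * n j

/-- The vacuum manifold `𝒩 = { s₊(n⊗n − (1/3)Id) : n ∈ S² }`. -/
def Nset (a b c : ℝ) : Set Mat3 :=
  {Q | ∃ n : Fin 3 → ℝ, (∑ i, n i ^ 2) = 1 ∧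
    Q = sPlus a b c • (outer n - (1 / 3 : ℝ) • (1 : Mat3))}

/-- Squared Frobenius norm `tr(AAᵀ) = ∑ᵢⱼ Aᵢⱼ²`. -/
def frobSq (A : Mat3) : ℝ := ∑ i, ∑ j, (A i j) ^ 2

/-- Frobenius norm. -/
def frob (A : Mat3) : ℝ := Real.sqrt (frobSq A)

/-- The additive normalization constant `C₀ = a²s₊²/3 + 2b²s₊³/27 − c²s₊⁴/9`. -/
def C0 (a b c : ℝ) : ℝ :=
  a ^ 2 * (sPlus a b c) ^ 2 / 3 + 2 * b ^ 2 * (sPlus a b c) ^ 3 / 27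
    - c ^ 2 * (sPlus a b c) ^ 4 / 9

/-- The bulk potential `f_b(Q)`. -/
def fb (a b c : ℝ) (Q : Mat3) : ℝ :=
  -(a ^ 2 / 2) * (Q * Q).trace - (b ^ 2 / 3) * (Q * Q * Q).trace
    + (c ^ 2 / 4) * ((Q * Q).trace) ^ 2 + C0 a b c

/-- Frobenius distance from `Q` to the manifold `𝒩`. -/
def distN (a b c : ℝ) (Q : Mat3) : ℝ := sInf {d : ℝ | ∃ N ∈ Nset a b c, d = frob (Q - N)}

/-- Partial derivative `∂_α Q(x)` of a matrix-valued map. -/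
def pd (Q : E3 → Mat3) (α : Fin 3) (x : E3) : Mat3 :=
  fderiv ℝ Q x (EuclideanSpace.single α 1)

/-- `|∇Q(x)|² = ∑_α |∂_αQ(x)|²` (Frobenius norms). -/
def gradSq (Q : E3 → Mat3) (x : E3) : ℝ := ∑ α, frobSq (pd Q α x)

/-- Radial derivative `(∂Q/∂r)(x) = ∑_α (x_α/|x|) ∂_αQ(x)`. -/
def radD (Q : E3 → Mat3) (x : E3) : Mat3 := ‖x‖⁻¹ • ∑ α, (x α) • pd Q α x

/-- Componentwise Laplacian `ΔQ(x)`. -/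
def lap (Q : E3 → Mat3) (x : E3) : Mat3 :=
  ∑ α, fderiv ℝ (fun y => pd Q α y) x (EuclideanSpace.single α 1)

/-- The Landau–de Gennes energy density `e_ε(Q) = ½|∇Q|² + ε⁻²f_b(Q)`. -/
def eDen (a b c ε : ℝ) (Q : E3 → Mat3) (x : E3) : ℝ :=
  gradSq Q x / 2 + (ε ^ 2)⁻¹ * fb a b c (Q x)

/-- `Q` is a local minimizer of `I_ε(·, U)`: its energy density is locally integrable on `U`
and it minimizes the energy on every bounded open `D` with closure in `U` among competitors
with locally integrable energy density agreeing with `Q` outside a compact subset of `D`. -/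
def IsLocalMinimizer (a b c ε : ℝ) (U : Set E3) (Q : E3 → Mat3) : Prop :=
  LocallyIntegrableOn (eDen a b c ε Q) U volume ∧
  ∀ D : Set E3, IsOpen D → Bornology.IsBounded D → closure D ⊆ U →
    ∀ V : E3 → Mat3, LocallyIntegrableOn (eDen a b c ε V) U volume →
      (∃ K : Set E3, K ⊆ D ∧ IsCompact K ∧ ∀ x ∈ U \ K, V x = Q x) →
      ∫ x in D, eDen a b c ε Q x ≤ ∫ x in D, eDen a b c ε V x



lemma outer_mul_outer (n : Fin 3 → ℝ) :
    outer n * outer n = (∑ i, n i ^ 2) • outer n := by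
  ext i j
  simp [outer, Matrix.mul_apply, Fin.sum_univ_three]
  ring

lemma proj_rank_one (P : Mat3) (hsym : P.IsSymm) (hP : P * P = P) (htr : P.trace = 1) :
    ∃ n : Fin 3 → ℝ, (∑ i, n i ^ 2) = 1 ∧ P = outer n := by
  have hsym' : ∀ i j, P i j = P j i := fun i j => (hsym.apply i j).symm
  have hPk : ∀ i j, ∑ k, P i k * P k j = P i j := by
    intro i j
    have := congrFun (congrFun hP i) j
    simpa [Matrix.mul_apply] using this
  have hdiag : ∀ i, P i i = ∑ k, (P k i) ^ 2 := by
    intro i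
    rw [← hPk i i]
    exact Finset.sum_congr rfl fun k _ => by rw [hsym' i k]; ring
  have htr' : ∑ i, P i i = 1 := by simpa [Matrix.trace, Matrix.diag] using htr
  have hex : ∃ i, P i i ≠ 0 := by
    by_contra h
    push_neg at h
    rw [Finset.sum_congr rfl fun i _ => h i] at htr'
    simp at htr'
  obtain ⟨i, hi⟩ := hex
  set d := P i i with hd
  have hdpos : 0 < d := by
    have : 0 ≤ d := by rw [hd, hdiag i]; positivity
    exact lt_of_le_of_ne this (Ne.symm hi)
  have h1 : ∑ j, ∑ k, (P j k) ^ 2 = 1 := by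
    calc ∑ j, ∑ k, (P j k) ^ 2 = ∑ j, ∑ k, P j k * P k j := by
          refine Finset.sum_congr rfl fun j _ => Finset.sum_congr rfl fun k _ => ?_
          rw [hsym' k j]; ring
      _ = ∑ j, P j j := Finset.sum_congr rfl fun j _ => hPk j j
      _ = 1 := htr'
  have h2 : ∑ j, ∑ k, P j k * (P j i * P k i) = d := by
    calc ∑ j, ∑ k, P j k * (P j i * P k i)
        = ∑ j, P j i * ∑ k, P j k * P k i := by
          refine Finset.sum_congr rfl fun j _ => ?_
          rw [Finset.mul_sum]
          exact Finset.sum_congr rfl fun k _ => by ring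
      _ = ∑ j, P j i * P j i := Finset.sum_congr rfl fun j _ => by rw [hPk j i]
      _ = ∑ j, (P j i) ^ 2 := Finset.sum_congr rfl fun j _ => by ring
      _ = d := (hdiag i).symm
  have h3 : ∑ j, ∑ k, (P j i * P k i) ^ 2 = d ^ 2 := by
    calc ∑ j, ∑ k, (P j i * P k i) ^ 2
        = ∑ j, (P j i) ^ 2 * ∑ k, (P k i) ^ 2 := by
          refine Finset.sum_congr rfl fun j _ => ?_
          rw [Finset.mul_sum]
          exact Finset.sum_congr rfl fun k _ => by ring
      _ = (∑ j, (P j i) ^ 2) * ∑ k, (P k i) ^ 2 := by rw [← Finset.sum_mul]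
      _ = d ^ 2 := by rw [← hdiag i]; ring
  have hS : ∑ j, ∑ k, (P j k * d - P j i * P k i) ^ 2 = 0 := by
    have expand : ∀ j k : Fin 3, (P j k * d - P j i * P k i) ^ 2
        = (P j k) ^ 2 * d ^ 2 - 2 * d * (P j k * (P j i * P k i)) + (P j i * P k i) ^ 2 := by
      intro j k; ring
    calc ∑ j, ∑ k, (P j k * d - P j i * P k i) ^ 2
        = ∑ j, ∑ k, ((P j k) ^ 2 * d ^ 2 - 2 * d * (P j k * (P j i * P k i))
            + (P j i * P k i) ^ 2) :=
          Finset.sum_congr rfl fun j _ => Finset.sum_congr rfl fun k _ => expand j k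
      _ = (∑ j, ∑ k, (P j k) ^ 2) * d ^ 2 - 2 * d * (∑ j, ∑ k, P j k * (P j i * P k i))
            + ∑ j, ∑ k, (P j i * P k i) ^ 2 := by
          simp [Finset.sum_add_distrib, Finset.sum_sub_distrib, Finset.sum_mul, Finset.mul_sum]
      _ = 0 := by rw [h1, h2, h3]; ring
  have key : ∀ j k, P j k * d = P j i * P k i := by
    intro j k
    have h0 : ∀ j ∈ Finset.univ, (0:ℝ) ≤ ∑ k, (P j k * d - P j i * P k i) ^ 2 :=
      fun j _ => Finset.sum_nonneg fun k _ => sq_nonneg _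
    have hj := (Finset.sum_eq_zero_iff_of_nonneg h0).mp hS j (Finset.mem_univ j)
    have hk := (Finset.sum_eq_zero_iff_of_nonneg
      (fun k _ => sq_nonneg (P j k * d - P j i * P k i))).mp hj k (Finset.mem_univ k)
    have := pow_eq_zero_iff (n := 2) (by norm_num) |>.mp hk
    linarith [this]
  refine ⟨fun k => P k i / Real.sqrt d, ?_, ?_⟩
  · have hsq : Real.sqrt d ^ 2 = d := Real.sq_sqrt hdpos.le
    rw [Finset.sum_congr rfl fun k _ => div_pow (P k i) (Real.sqrt d) 2]
    rw [← Finset.sum_div, hsq, ← hdiag i, div_self hi]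
  · ext j k
    have hsq : Real.sqrt d * Real.sqrt d = d := Real.mul_self_sqrt hdpos.le
    have houter : outer (fun k => P k i / Real.sqrt d) j k = P j i * P k i / d := by
      simp only [outer]
      rw [div_mul_div_comm, hsq]
    rw [houter, ← key j k, mul_div_assoc, div_self hi]
    ring

lemma sPlus_pos (a b c : ℝ) (hb : 0 < b) (hc : 0 < c) : 0 < sPlus a b c := by
  unfold sPlus
  have h1 : 0 ≤ Real.sqrt (b ^ 4 + 24 * a ^ 2 * c ^ 2) := Real.sqrt_nonneg _
  have h2 : 0 < b ^ 2 := by positivity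
  have h3 : 0 < 4 * c ^ 2 := by positivity
  positivity

/-- a symmetric traceless `Q` belongs to `𝒩` iff it satisfies
`Q² − (s₊/3)Q − (2s₊²/9)Id = 0`. -/
theorem stmt1 (a b c : ℝ) (ha : 0 < a) (hb : 0 < b) (hc : 0 < c)
    (Q : Mat3) (hsym : Q.IsSymm) (htr : Q.trace = 0) :
    Q ∈ Nset a b c ↔
      Q * Q - (sPlus a b c / 3) • Q - (2 * (sPlus a b c) ^ 2 / 9) • (1 : Mat3) = 0 := by
  have hs : 0 < sPlus a b c := sPlus_pos a b c hb hc
  set s := sPlus a b c with hsdef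
  constructor
  · rintro ⟨n, hn, rfl⟩
    have hM : outer n * outer n = outer n := by
      rw [outer_mul_outer, hn, one_smul]
    simp only [smul_sub, sub_mul, mul_sub, Matrix.smul_mul, Matrix.mul_smul, hM,
      smul_smul, one_mul, mul_one, Matrix.one_mul, Matrix.mul_one]
    module
  · intro hEq
    rw [sub_sub, sub_eq_zero] at hEq
    set P : Mat3 := s⁻¹ • Q + (1/3 : ℝ) • (1 : Mat3) with hPdef
    have hPsym : P.IsSymm := by
      simp [hPdef, Matrix.IsSymm, Matrix.transpose_add, Matrix.transpose_smul,
        hsym.eq, Matrix.transpose_one]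
    have hPtr : P.trace = 1 := by
      simp [hPdef, Matrix.trace_add, Matrix.trace_smul, htr, Matrix.trace_one]
    have hP2 : P * P = P := by
      rw [hPdef]
      simp only [add_mul, mul_add, Matrix.smul_mul, Matrix.mul_smul, hEq, smul_smul, smul_add,
        Matrix.one_mul, Matrix.mul_one]
      rw [show s⁻¹ * (s⁻¹ * (s / 3)) = s⁻¹ * (1/3) by field_simp,
          show s⁻¹ * (s⁻¹ * (2 * s ^ 2 / 9)) = 2/9 by field_simp]
      module
    obtain ⟨n, hn, hPn⟩ := proj_rank_one P hPsym hP2 hPtr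
    refine ⟨n, hn, ?_⟩
    have : outer n = s⁻¹ • Q + (1/3 : ℝ) • (1 : Mat3) := by rw [← hPn, hPdef]
    rw [this]
    rw [smul_sub, smul_add, smul_smul, mul_inv_cancel₀ hs.ne', one_smul]
    module

end
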